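/- Let C4 = ⟨t⟩ be the cyclic group of order 4, let M₂ be the ℤ[C4]-module ℤ² with t acting by t·x = −y, t·y = x on the standard basis x, y, and let P = ℤ[C4] ⊗_{ℤ[C2]} ℤ be the permutation module on the cosets of the order-2 subgroup C2 ⊂ C4. Then there is an isomorphism of ℤ[C4]-modules M₂ ⊗_ℤ M₂ ≅ P ⊕ P, where C4 acts diagonally on the tensor product. -/

import Mathlib

/-- A monoid hom out of `Multiplicative (ZMod n)` determined by an element `g` with `g ^ n = 1`. -/
def zmodPowHom {G : Type*} [Monoid G] (n : ℕ) [NeZero n] (g : G) (h : g ^ n = 1) :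
    Multiplicative (ZMod n) →* G where
  toFun x := g ^ (Multiplicative.toAdd x).val
  map_one' := by
    show g ^ (0 : ZMod n).val = 1
    simp [ZMod.val_zero]
  map_mul' x y := by
    have key : ∀ m : ℕ, g ^ (m % n) = g ^ m := fun m => by
      conv_rhs => rw [← Nat.div_add_mod m n]
      rw [pow_add, pow_mul, h, one_pow, one_mul]
    show g ^ ((Multiplicative.toAdd x) + (Multiplicative.toAdd y)).val = _
    rw [ZMod.val_add, key, pow_add]

/-- The cyclic group of order 4, written multiplicatively. -/
abbrev C4 : Type := Multiplicative (ZMod 4)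

/-- The rank-two `ℤ[C4]`-lattice `M₂ = ℤ²`: the generator `t` acts on the standard basis
`x = e₀`, `y = e₁` by `t·x = -y`, `t·y = x`. -/
noncomputable def M2rep : Representation ℤ C4 (Fin 2 → ℤ) :=
  zmodPowHom 4 (Matrix.toLinAlgEquiv' !![0, 1; -1, 0])
    (by
      rw [← map_pow, ← map_one (Matrix.toLinAlgEquiv' (n := Fin 2) (R := ℤ))]
      norm_num [pow_succ, Matrix.mul_fin_two]
      exact congrArg _ Matrix.one_fin_two.symm)

/-- The subgroup of order 2 in `C4`. -/
def C2inC4 : Subgroup C4 := Subgroup.zpowers (Multiplicative.ofAdd (2 : ZMod 4))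

/-- The permutation `ℤ[C4]`-module `P = ℤ[C4] ⊗_{ℤ[C2]} ℤ` on the cosets `C4 ⧸ C2`. -/
noncomputable def Prep : Representation ℤ C4 ((C4 ⧸ C2inC4) →₀ ℤ) :=
  { toFun := fun g => Finsupp.lmapDomain ℤ ℤ (g • ·)
    map_one' := by ext; simp
    map_mul' := fun x y => by ext; simp [mul_smul] }

/-!
The square `t²` acts as `-1` on `M₂`, hence trivially on `M₂ ⊗ M₂`, so for `v = x ⊗ x` and
`v = x ⊗ y` the orbit map `g C₂ ↦ g • v` is well defined on `C4 ⧸ C₂` and extends to a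
`ℤ[C4]`-linear map `P ⊕ P → M₂ ⊗ M₂`. Since `t • (x ⊗ x) = y ⊗ y` and `t • (x ⊗ y) = -(y ⊗ x)`,
it sends the ℤ-basis of `P ⊕ P` to the basis `x ⊗ x, y ⊗ y, x ⊗ y, -(y ⊗ x)` of `M₂ ⊗ M₂`, so it
is an isomorphism.
-/

open TensorProduct

namespace Representation

section Monoid

variable {k G V W U : Type*} [CommSemiring k] [Monoid G] [AddCommMonoid V] [Module k V]
  [AddCommMonoid W] [Module k W] [AddCommMonoid U] [Module k U]
  {ρ : Representation k G V} {σ : Representation k G W} {τ : Representation k G U}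

noncomputable def Equiv.toLinearEquivAsModule (φ : ρ.Equiv σ) :
    ρ.asModule ≃ₗ[MonoidAlgebra k G] σ.asModule :=
  { IntertwiningMap.equivLinearMapAsModule ρ σ φ.toIntertwiningMap with
    invFun := φ.symm
    left_inv := φ.symm_apply_apply
    right_inv := φ.apply_symm_apply }

variable (ρ σ) in
noncomputable def prodAsModuleEquiv :
    (ρ.prod σ).asModule ≃ₗ[MonoidAlgebra k G] ρ.asModule × σ.asModule :=
  { AddEquiv.refl (V × W) with
    map_smul' r := by
      suffices ∀ v : V × W,
          (ρ.prod σ).asAlgebraHom r v = (ρ.asAlgebraHom r v.1, σ.asAlgebraHom r v.2) from this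
      induction r using MonoidAlgebra.induction_linear with
      | zero => intro v; rfl
      | add a b ha hb => simp [ha, hb]
      | single g c => simp }

noncomputable def IntertwiningMap.coprod (f : ρ.IntertwiningMap τ) (g : σ.IntertwiningMap τ) :
    (ρ.prod σ).IntertwiningMap τ :=
  (f.toLinearMap.coprod g.toLinearMap).intertwiningMap_of_isIntertwiningMap _ _ fun _ _ => by
    simp [IntertwiningMap.isIntertwining]

@[simp]
lemma IntertwiningMap.coprod_apply (f : ρ.IntertwiningMap τ) (g : σ.IntertwiningMap τ)
    (v : V × W) : f.coprod g v = f v.1 + g v.2 :=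
  rfl

variable (k G) in
noncomputable def ofMulActionFinsupp (X : Type*) [MulAction G X] :
    Representation k G (X →₀ k) where
  toFun g := Finsupp.lmapDomain k k (g • ·)
  map_one' := by ext; simp
  map_mul' g h := by ext; simp [mul_smul]

@[simp]
lemma ofMulActionFinsupp_single {X : Type*} [MulAction G X] (g : G) (x : X) (r : k) :
    ofMulActionFinsupp k G X g (Finsupp.single x r) = Finsupp.single (g • x) r :=
  Finsupp.mapDomain_single

noncomputable def finsuppLift {X : Type*} [MulAction G X] (ρ : Representation k G V)
    (f : X → V) (hf : ∀ (g : G) x, f (g • x) = ρ g (f x)) :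
    (ofMulActionFinsupp k G X).IntertwiningMap ρ :=
  (Finsupp.linearCombination k f).intertwiningMap_of_isIntertwiningMap _ _ fun g v => by
    induction v using Finsupp.induction_linear with
    | zero => simp
    | add v w hv hw => simp only [map_add, hv, hw]
    | single x r => simp [hf]

@[simp]
lemma finsuppLift_single {X : Type*} [MulAction G X] (ρ : Representation k G V) (f : X → V)
    (hf : ∀ (g : G) x, f (g • x) = ρ g (f x)) (x : X) (r : k) :
    finsuppLift ρ f hf (Finsupp.single x r) = r • f x :=
  Finsupp.linearCombination_single k r x

end Monoid

section Group

variable {k G V : Type*} [CommSemiring k] [Group G] [AddCommMonoid V] [Module k V]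

def cosetOrbitMap (ρ : Representation k G V) (H : Subgroup G) (v : V)
    (hv : ∀ h ∈ H, ρ h v = v) : G ⧸ H → V :=
  Quotient.lift (fun g => ρ g v) fun a b hab => by
    rw [← mul_inv_cancel_left a b, map_mul, Module.End.mul_apply,
      hv _ (QuotientGroup.leftRel_apply.mp hab)]

@[simp]
lemma cosetOrbitMap_mk (ρ : Representation k G V) (H : Subgroup G) (v : V)
    (hv : ∀ h ∈ H, ρ h v = v) (g : G) : cosetOrbitMap ρ H v hv g = ρ g v :=
  rfl

lemma cosetOrbitMap_smul (ρ : Representation k G V) (H : Subgroup G) (v : V)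
    (hv : ∀ h ∈ H, ρ h v = v) (g : G) (q : G ⧸ H) :
    cosetOrbitMap ρ H v hv (g • q) = ρ g (cosetOrbitMap ρ H v hv q) := by
  induction q using QuotientGroup.induction_on with
  | H a => simp [map_mul]

end Group

end Representation

open Representation

def C4.gen : C4 := Multiplicative.ofAdd 1

lemma C4.coset_eq_one_or_eq_gen (q : C4 ⧸ C2inC4) : q = ↑(1 : C4) ∨ q = ↑C4.gen := by
  induction q using QuotientGroup.induction_on with | H x => ?_
  have two_mem : Multiplicative.ofAdd (2 : ZMod 4) ∈ C2inC4 := Subgroup.mem_zpowers _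
  have quotients : ∀ x : C4, x⁻¹ * 1 = 1 ∨ x⁻¹ * 1 = Multiplicative.ofAdd 2 ∨
      x⁻¹ * C4.gen = 1 ∨ x⁻¹ * C4.gen = Multiplicative.ofAdd 2 := by decide
  simp only [QuotientGroup.eq]
  rcases quotients x with h | h | h | h <;> simp [h, two_mem]

lemma M2rep_gen : M2rep C4.gen = Matrix.toLin' !![0, 1; -1, 0] :=
  pow_one _

lemma M2rep_ofAdd_two : M2rep (Multiplicative.ofAdd 2) = -1 := by
  change Matrix.toLinAlgEquiv' !![(0 : ℤ), 1; -1, 0] ^ 2 = -1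
  have sq_eq : !![(0 : ℤ), 1; -1, 0] ^ 2 = -1 := by
    ext i j; fin_cases i <;> fin_cases j <;> simp [sq]
  rw [← map_pow, sq_eq, map_neg, map_one]

@[simp]
lemma M2rep_gen_single_zero : M2rep C4.gen (Pi.single 0 1) = -Pi.single 1 1 := by
  ext i; fin_cases i <;> simp [M2rep_gen, Matrix.toLin'_apply, Matrix.mulVec, dotProduct]

@[simp]
lemma M2rep_gen_single_one : M2rep C4.gen (Pi.single 1 1) = Pi.single 0 1 := by
  ext i; fin_cases i <;> simp [M2rep_gen, Matrix.toLin'_apply, Matrix.mulVec, dotProduct]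

lemma C2inC4_le_ker_tprod : C2inC4 ≤ (M2rep.tprod M2rep).ker := by
  refine Subgroup.zpowers_le.mpr (MonoidHom.mem_ker.mpr ?_)
  refine TensorProduct.ext' fun x y => ?_
  simp [M2rep_ofAdd_two, neg_tmul, tmul_neg]

noncomputable def tensorOrbitMap (v : (Fin 2 → ℤ) ⊗[ℤ] (Fin 2 → ℤ)) :
    C4 ⧸ C2inC4 → (Fin 2 → ℤ) ⊗[ℤ] (Fin 2 → ℤ) :=
  cosetOrbitMap (M2rep.tprod M2rep) C2inC4 v fun _ hh => by
    rw [MonoidHom.mem_ker.mp (C2inC4_le_ker_tprod hh)]; rfl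

noncomputable def permProdToTensor :
    ((ofMulActionFinsupp ℤ C4 (C4 ⧸ C2inC4)).prod
      (ofMulActionFinsupp ℤ C4 (C4 ⧸ C2inC4))).IntertwiningMap (M2rep.tprod M2rep) :=
  (finsuppLift _ (tensorOrbitMap (Pi.single 0 1 ⊗ₜ Pi.single 0 1))
      (cosetOrbitMap_smul _ _ _ _)).coprod
    (finsuppLift _ (tensorOrbitMap (Pi.single 0 1 ⊗ₜ Pi.single 1 1))
      (cosetOrbitMap_smul _ _ _ _))

noncomputable def stdTensorBasis :=
  (Pi.basisFun ℤ (Fin 2)).tensorProduct (Pi.basisFun ℤ (Fin 2))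

lemma stdTensorBasis_apply (i j : Fin 2) :
    stdTensorBasis (i, j) = Pi.single i 1 ⊗ₜ Pi.single j 1 := by
  rw [stdTensorBasis, Module.Basis.tensorProduct_apply, Pi.basisFun_apply, Pi.basisFun_apply]

noncomputable def signedCosetPair :
    Fin 2 × Fin 2 → ((C4 ⧸ C2inC4) →₀ ℤ) × ((C4 ⧸ C2inC4) →₀ ℤ)
  | (0, 0) => (Finsupp.single ↑(1 : C4) 1, 0)
  | (1, 1) => (Finsupp.single ↑C4.gen 1, 0)
  | (0, 1) => (0, Finsupp.single ↑(1 : C4) 1)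
  | (1, 0) => (0, -Finsupp.single ↑C4.gen 1)

noncomputable def tensorToPermProd :=
  stdTensorBasis.constr ℤ signedCosetPair

@[simp]
lemma tensorToPermProd_single_tmul_single (i j : Fin 2) :
    tensorToPermProd (Pi.single i 1 ⊗ₜ Pi.single j 1) = signedCosetPair (i, j) := by
  rw [← stdTensorBasis_apply, tensorToPermProd, Module.Basis.constr_basis]

lemma permProdToTensor_tensorToPermProd (v : (Fin 2 → ℤ) ⊗[ℤ] (Fin 2 → ℤ)) :
    permProdToTensor (tensorToPermProd v) = v := by
  suffices permProdToTensor.toLinearMap ∘ₗ tensorToPermProd = LinearMap.id from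
    LinearMap.congr_fun this v
  refine stdTensorBasis.ext fun ⟨i, j⟩ => ?_
  rw [LinearMap.comp_apply, LinearMap.id_apply, stdTensorBasis_apply]
  fin_cases i <;> fin_cases j <;>
    simp [signedCosetPair, permProdToTensor, tensorOrbitMap, neg_tmul, tmul_neg,
      -QuotientGroup.mk_one]

lemma tensorToPermProd_permProdToTensor (v : ((C4 ⧸ C2inC4) →₀ ℤ) × ((C4 ⧸ C2inC4) →₀ ℤ)) :
    tensorToPermProd (permProdToTensor v) = v := by
  suffices tensorToPermProd ∘ₗ permProdToTensor.toLinearMap = LinearMap.id from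
    LinearMap.congr_fun this v
  ext q : 3 <;> rcases C4.coset_eq_one_or_eq_gen q with rfl | rfl <;>
    simp [signedCosetPair, permProdToTensor, tensorOrbitMap, neg_tmul, tmul_neg,
      -QuotientGroup.mk_one]

-- `Prep` is by definition `ofMulActionFinsupp ℤ C4 (C4 ⧸ C2inC4)`.
noncomputable def tensorEquivPermProd : (M2rep.tprod M2rep).Equiv (Prep.prod Prep) :=
  (permProdToTensor.ofBijective (Function.bijective_iff_has_inverse.mpr
    ⟨tensorToPermProd, tensorToPermProd_permProdToTensor, permProdToTensor_tensorToPermProd⟩)).symm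

/-- there is an isomorphism of `ℤ[C4]`-modules `M₂ ⊗_ℤ M₂ ≅ P ⊕ P`, where `C4`
acts diagonally on the tensor product. -/
theorem M2_tensor_M2_iso_P_sum_P :
    Nonempty ((M2rep.tprod M2rep).asModule ≃ₗ[MonoidAlgebra ℤ C4]
      (Prep.asModule × Prep.asModule)) :=
  ⟨tensorEquivPermProd.toLinearEquivAsModule.trans (prodAsModuleEquiv Prep Prep)⟩
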